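/- Every advantaged student assigned under DA to a school that is not fully segregated is unimprovable: if y ∈ Y, DA_y(P) = s, and school s is also assigned at least one marginalized student under DA, then every stable-dominating matching ν satisfies ν(y) = s. -/
import Mathlib


/-!
A school choice problem: finitely many students `I` and schools `S`
(with a distinguished null school of quota `|I|`).  Each student `i` has a
strict preference over schools represented by its rank function
`rk i : S → ℕ` (a bijection onto `{1, …, |S|}`, where rank 1 is the most
preferred school); each school `s` has a quota `quota s ≥ 1` and a strict
priority over students represented by `prio s : I → ℕ`
(`i ▷_s j` iff `prio s i < prio s j`).
-/
structure SchoolChoice (I S : Type) [Fintype I] [Fintype S]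
    [DecidableEq I] [DecidableEq S] where
  nullSchool : S
  quota : S → ℕ
  rk : I → S → ℕ
  prio : S → I → ℕ
  quota_pos : ∀ s : S, 1 ≤ quota s
  quota_null : quota nullSchool = Fintype.card I
  rk_inj : ∀ i : I, Function.Injective (rk i)
  rk_mem : ∀ (i : I) (s : S), rk i s ∈ Finset.Icc 1 (Fintype.card S)
  prio_inj : ∀ s : S, Function.Injective (prio s)

namespace SchoolChoice

open scoped Classical

variable {I S : Type} [Fintype I] [Fintype S] [DecidableEq I] [DecidableEq S]

/-- `μ` is a matching: no school is assigned more students than its quota. -/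
def IsMatching (P : SchoolChoice I S) (μ : I → S) : Prop :=
  ∀ s : S, (Finset.univ.filter fun i => μ i = s).card ≤ P.quota s

/-- Given the sets `R i` of schools that have rejected student `i` so far,
student `i` proposes to her most preferred school that has not rejected her. -/
noncomputable def propose (P : SchoolChoice I S) (R : I → Finset S) (i : I) : S :=
  if h : (Finset.univ \ R i).Nonempty then
    (Finset.exists_min_image (Finset.univ \ R i) (P.rk i) h).choose
  else P.nullSchool

/-- At the DA round with rejection state `R`, school `s` rejects student `i`:
`i` applies to `s` and at least `quota s` applicants to `s` have higher priority. -/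
def rejectsAt (P : SchoolChoice I S) (R : I → Finset S) (s : S) (i : I) : Prop :=
  P.propose R i = s ∧
    P.quota s ≤ (Finset.univ.filter fun j =>
      P.propose R j = s ∧ P.prio s j < P.prio s i).card

/-- One round of student-proposing Deferred Acceptance: record new rejections. -/
noncomputable def stepR (P : SchoolChoice I S) (R : I → Finset S) : I → Finset S :=
  fun i => R i ∪ (Finset.univ.filter fun s => P.rejectsAt R s i)

/-- Rejection state after `n` rounds of Deferred Acceptance. -/
noncomputable def daR (P : SchoolChoice I S) : ℕ → I → Finset S
  | 0 => fun _ => (∅ : Finset S)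
  | n + 1 => P.stepR (P.daR n)

/-- The outcome of the student-proposing Deferred Acceptance algorithm:
iterate rounds until no rejection occurs (which happens within
`|I|·|S| + 1` rounds); each student is matched to the school holding her. -/
noncomputable def DA (P : SchoolChoice I S) : I → S :=
  P.propose (P.daR (Fintype.card I * Fintype.card S + 1))

/-- A matching `ν` is stable-dominating if every student weakly prefers
`ν` to the DA outcome. -/
def StableDominating (P : SchoolChoice I S) (ν : I → S) : Prop :=
  P.IsMatching ν ∧ ∀ i : I, P.rk i (ν i) ≤ P.rk i (P.DA i)

/-- Student `i` is unimprovable: every stable-dominating matching assigns `i`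
to her DA school. -/
def Unimprovable (P : SchoolChoice I S) (i : I) : Prop :=
  ∀ ν : I → S, P.StableDominating ν → ν i = P.DA i

/-- Edge of the envy digraph `G^DA(P)`: `i` prefers `j`'s DA school to her own. -/
def Envy (P : SchoolChoice I S) (i j : I) : Prop :=
  P.rk i (P.DA j) < P.rk i (P.DA i)

/-- Student `i` lies on a directed cycle of the envy digraph `G^DA(P)`. -/
def OnCycle (P : SchoolChoice I S) (i : I) : Prop :=
  ∃ (m : ℕ) (c : ℕ → I), 0 < m ∧ c 0 = i ∧ c m = i ∧
    ∀ k < m, P.Envy (c k) (c (k + 1))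

/-- Student `i` desires school `s` in matching `μ`. -/
def Desires (P : SchoolChoice I S) (μ : I → S) (i : I) (s : S) : Prop :=
  P.rk i s < P.rk i (μ i)

/-- `μ` is non-wasteful: every desired school is filled to quota. -/
def NonWasteful (P : SchoolChoice I S) (μ : I → S) : Prop :=
  ∀ s : S, (∃ i : I, P.Desires μ i s) →
    (Finset.univ.filter fun i => μ i = s).card = P.quota s

/-- `μ` is stable: a non-wasteful matching with no priority violations. -/
def Stable (P : SchoolChoice I S) (μ : I → S) : Prop :=
  P.IsMatching μ ∧ P.NonWasteful μ ∧
    ¬ ∃ (i j : I) (s : S), P.Desires μ i s ∧ μ j = s ∧ P.prio s i < P.prio s j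

/-- `μ` Pareto-dominates `ν`. -/
def ParetoDominates (P : SchoolChoice I S) (μ ν : I → S) : Prop :=
  (∀ i : I, P.rk i (μ i) ≤ P.rk i (ν i)) ∧ ∃ i : I, P.rk i (μ i) < P.rk i (ν i)

/-- `μ` is a Pareto-efficient matching. -/
def ParetoEfficient (P : SchoolChoice I S) (μ : I → S) : Prop :=
  P.IsMatching μ ∧ ∀ ν : I → S, P.IsMatching ν → ¬ P.ParetoDominates ν μ

end SchoolChoice

namespace SchoolChoice

open Finset
open scoped Classical

variable {I S : Type} [Fintype I] [Fintype S] [DecidableEq I] [DecidableEq S]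
variable (P : SchoolChoice I S)

lemma propose_spec {R : I → Finset S} {i : I} (h : (Finset.univ \ R i).Nonempty) :
    P.propose R i ∈ Finset.univ \ R i ∧
      ∀ s ∈ Finset.univ \ R i, P.rk i (P.propose R i) ≤ P.rk i s := by
  rw [propose, dif_pos h]
  exact (Finset.exists_min_image (Finset.univ \ R i) (P.rk i) h).choose_spec

lemma not_rejectsAt_null (R : I → Finset S) (i : I) :
    ¬ P.rejectsAt R P.nullSchool i := by
  rintro ⟨-, hq⟩
  have hsub : (Finset.univ.filter fun j => P.propose R j = P.nullSchool ∧
      P.prio P.nullSchool j < P.prio P.nullSchool i) ⊆ Finset.univ.erase i := by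
    intro j hj
    simp only [mem_filter] at hj
    exact mem_erase.mpr ⟨fun h => absurd (h ▸ hj.2.2) (lt_irrefl _), mem_univ j⟩
  have h1 : (0 : ℕ) < Fintype.card I := Fintype.card_pos_iff.mpr ⟨i⟩
  have h2 := (card_le_card hsub)
  rw [card_erase_of_mem (mem_univ i), card_univ] at h2
  rw [P.quota_null] at hq
  omega

lemma null_not_mem_daR (n : ℕ) (i : I) : P.nullSchool ∉ P.daR n i := by
  induction n with
  | zero => simp [daR]
  | succ n ih =>
    simp only [daR, stepR, mem_union, mem_filter]
    rintro (h | ⟨-, h⟩)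
    · exact ih h
    · exact P.not_rejectsAt_null _ _ h

lemma daR_diff_nonempty (n : ℕ) (i : I) : (Finset.univ \ P.daR n i).Nonempty :=
  ⟨P.nullSchool, mem_sdiff.mpr ⟨mem_univ _, P.null_not_mem_daR n i⟩⟩

lemma propose_daR_not_mem (n : ℕ) (i : I) : P.propose (P.daR n) i ∉ P.daR n i :=
  (mem_sdiff.mp (P.propose_spec (P.daR_diff_nonempty n i)).1).2

lemma daR_subset (n : ℕ) (i : I) : P.daR n i ⊆ P.daR (n + 1) i := by
  simp only [daR, stepR]; exact subset_union_left

lemma propose_persist {R R' : I → Finset S} {i : I} (hsub : R i ⊆ R' i)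
    (hnull : P.nullSchool ∉ R' i) (hmem : P.propose R i ∉ R' i) :
    P.propose R' i = P.propose R i := by
  have h' : (Finset.univ \ R' i).Nonempty := ⟨P.nullSchool, mem_sdiff.mpr ⟨mem_univ _, hnull⟩⟩
  have h : (Finset.univ \ R i).Nonempty := by
    refine ⟨P.nullSchool, mem_sdiff.mpr ⟨mem_univ _, fun hc => hnull (hsub hc)⟩⟩
  have hP := P.propose_spec h
  have hP' := P.propose_spec h'
  have hsub' : Finset.univ \ R' i ⊆ Finset.univ \ R i := by
    intro x hx
    rw [mem_sdiff] at hx ⊢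
    exact ⟨hx.1, fun hc => hx.2 (hsub hc)⟩
  have h1 : P.rk i (P.propose R' i) ≤ P.rk i (P.propose R i) :=
    hP'.2 _ (mem_sdiff.mpr ⟨mem_univ _, hmem⟩)
  have h2 : P.rk i (P.propose R i) ≤ P.rk i (P.propose R' i) :=
    hP.2 _ (hsub' hP'.1)
  exact P.rk_inj i (le_antisymm h1 h2)

lemma invariant_step (t : S) (i : I) (n : ℕ)
    (h : P.quota t ≤ (Finset.univ.filter fun j =>
      P.propose (P.daR n) j = t ∧ P.prio t j < P.prio t i).card) :
    P.quota t ≤ (Finset.univ.filter fun j =>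
      P.propose (P.daR (n + 1)) j = t ∧ P.prio t j < P.prio t i).card := by
  classical
  set R := P.daR n with hR
  set q := P.quota t with hq
  set App : Finset I := Finset.univ.filter (fun j => P.propose R j = t) with hAppdef
  set f : I → ℕ := fun j => (App.filter fun a => P.prio t a < P.prio t j).card with hfdef
  have hCapp : ∀ k : I, (Finset.univ.filter fun j =>
      P.propose R j = t ∧ P.prio t j < P.prio t k)
        = App.filter fun j => P.prio t j < P.prio t k := by
    intro k; rw [hAppdef, filter_filter]
  -- q ≤ App.card
  have hqApp : q ≤ App.card := by
    refine h.trans (card_le_card ?_)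
    rw [hCapp]; exact filter_subset _ _
  -- f is strictly monotone w.r.t. prio on App
  have hmono : ∀ j j' : I, j ∈ App → P.prio t j < P.prio t j' → f j < f j' := by
    intro j j' hj hlt
    have hsub : (App.filter fun a => P.prio t a < P.prio t j)
        ⊆ App.filter fun a => P.prio t a < P.prio t j' := by
      intro a ha; rw [mem_filter] at ha ⊢; exact ⟨ha.1, ha.2.trans hlt⟩
    refine card_lt_card ((Finset.ssubset_iff_of_subset hsub).mpr ⟨j, ?_, ?_⟩)
    · exact mem_filter.mpr ⟨hj, hlt⟩
    · intro hc; exact absurd (mem_filter.mp hc).2 (lt_irrefl _)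
  have hinj : Set.InjOn f App := by
    intro j hj j' hj' hf
    rw [Finset.mem_coe] at hj hj'
    by_contra hne
    rcases lt_trichotomy (P.prio t j) (P.prio t j') with hlt | heq | hlt
    · exact absurd hf (Nat.ne_of_lt (hmono j j' hj hlt))
    · exact hne (P.prio_inj t heq)
    · exact absurd hf.symm (Nat.ne_of_lt (hmono j' j hj' hlt))
  have hflt : ∀ j ∈ App, f j < App.card := by
    intro j hj
    have hsub : (App.filter fun a => P.prio t a < P.prio t j) ⊆ App.erase j := by
      intro a ha; rw [mem_filter] at ha
      exact mem_erase.mpr ⟨fun hc => absurd (hc ▸ ha.2) (lt_irrefl _), ha.1⟩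
    have h2 := card_le_card hsub
    rw [card_erase_of_mem hj] at h2
    have hpos : 0 < App.card := card_pos.mpr ⟨j, hj⟩
    have hfj : f j = (App.filter fun a => P.prio t a < P.prio t j).card := rfl
    omega
  have himg : App.image f = Finset.range App.card := by
    apply Finset.eq_of_subset_of_card_le
    · intro m hm
      rcases mem_image.mp hm with ⟨j, hj, rfl⟩
      exact mem_range.mpr (hflt j hj)
    · rw [card_range, Finset.card_image_of_injOn hinj]
  set D : Finset I := App.filter (fun j => f j < q) with hDdef
  have hDimg : D.image f = Finset.range q := by
    have h1 : D.image f = (App.image f).filter (· < q) := by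
      ext m
      simp only [mem_image, mem_filter]
      constructor
      · rintro ⟨j, hj, rfl⟩
        rw [hDdef, mem_filter] at hj
        exact ⟨⟨j, hj.1, rfl⟩, hj.2⟩
      · rintro ⟨⟨j, hj, rfl⟩, hm⟩
        exact ⟨j, by rw [hDdef, mem_filter]; exact ⟨hj, hm⟩, rfl⟩
    rw [h1, himg]
    ext m
    simp only [mem_filter, mem_range]
    omega
  have hDcard : D.card = q := by
    have hinjD : Set.InjOn f D :=
      hinj.mono (Finset.coe_subset.mpr (filter_subset _ _))
    rw [← Finset.card_image_of_injOn hinjD, hDimg, card_range]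
  have hDprio : ∀ j ∈ D, P.prio t j < P.prio t i := by
    intro j hj
    rw [hDdef, mem_filter] at hj
    by_contra hc
    push_neg at hc
    have hsub : (App.filter fun a => P.prio t a < P.prio t i)
        ⊆ App.filter fun a => P.prio t a < P.prio t j := by
      intro a ha; rw [mem_filter] at ha ⊢
      exact ⟨ha.1, lt_of_lt_of_le ha.2 hc⟩
    have : q ≤ f j := by
      rw [hCapp] at h
      exact h.trans (card_le_card hsub)
    omega
  have hDsurv : ∀ j ∈ D, P.propose (P.daR (n + 1)) j = t := by
    intro j hj
    rw [hDdef, mem_filter] at hj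
    obtain ⟨hjApp, hjf⟩ := hj
    have hprop : P.propose R j = t := (mem_filter.mp hjApp).2
    have hnotrej : ¬ P.rejectsAt R t j := by
      rintro ⟨-, hcard⟩
      rw [hCapp] at hcard
      have hfj : f j = (App.filter fun a => P.prio t a < P.prio t j).card := rfl
      omega
    have htnot : t ∉ P.daR (n + 1) j := by
      simp only [daR, stepR, mem_union, mem_filter, ← hR]
      rintro (hc | ⟨-, hc⟩)
      · exact (hprop ▸ P.propose_daR_not_mem n j) hc
      · exact hnotrej hc
    rw [← hprop]
    exact P.propose_persist (hR ▸ P.daR_subset n j) (P.null_not_mem_daR _ j)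
      (hprop ▸ htnot)
  have hsubfin : D ⊆ Finset.univ.filter fun j =>
      P.propose (P.daR (n + 1)) j = t ∧ P.prio t j < P.prio t i := by
    intro j hj
    exact mem_filter.mpr ⟨mem_univ j, hDsurv j hj, hDprio j hj⟩
  calc q = D.card := hDcard.symm
    _ ≤ _ := card_le_card hsubfin

lemma exists_fix : ∃ n ≤ Fintype.card I * Fintype.card S,
    P.daR (n + 1) = P.daR n := by
  by_contra hc
  push_neg at hc
  have hg : ∀ n, n ≤ Fintype.card I * Fintype.card S + 1 →
      n ≤ ∑ i : I, (P.daR n i).card := by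
    intro n
    induction n with
    | zero => intro _; exact Nat.zero_le _
    | succ n ih =>
      intro hn
      have h1 : n ≤ ∑ i : I, (P.daR n i).card := ih (by omega)
      have hne : P.daR (n + 1) ≠ P.daR n := hc n (by omega)
      have hex : ∃ i, P.daR (n + 1) i ≠ P.daR n i := by
        by_contra hcc; push_neg at hcc; exact hne (funext hcc)
      obtain ⟨i, hi⟩ := hex
      have hlt : ∑ i : I, (P.daR n i).card < ∑ i : I, (P.daR (n + 1) i).card := by
        apply Finset.sum_lt_sum
        · intro j _; exact card_le_card (P.daR_subset n j)
        · exact ⟨i, mem_univ i,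
            card_lt_card (lt_of_le_of_ne (P.daR_subset n i) (Ne.symm hi))⟩
      omega
  have hbound : ∑ i : I, (P.daR (Fintype.card I * Fintype.card S + 1) i).card
      ≤ Fintype.card I * Fintype.card S := by
    calc ∑ i : I, (P.daR (Fintype.card I * Fintype.card S + 1) i).card
        ≤ ∑ _i : I, Fintype.card S :=
          Finset.sum_le_sum fun i _ => by
            simpa using card_le_card (subset_univ (P.daR _ i))
      _ = Fintype.card I * Fintype.card S := by
          rw [Finset.sum_const, smul_eq_mul, card_univ]
  have := hg (Fintype.card I * Fintype.card S + 1) le_rfl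
  omega

lemma stepR_final_fix :
    P.stepR (P.daR (Fintype.card I * Fintype.card S + 1))
      = P.daR (Fintype.card I * Fintype.card S + 1) := by
  obtain ⟨n, hn, hfix⟩ := P.exists_fix
  have hfix' : P.stepR (P.daR n) = P.daR n := hfix
  have hpersist : ∀ m, n ≤ m → P.daR m = P.daR n := by
    intro m hm
    induction m, hm using Nat.le_induction with
    | base => rfl
    | succ m _ ih =>
      show P.stepR (P.daR m) = P.daR n
      rw [ih, hfix']
  rw [hpersist _ (by omega), hfix']

lemma not_rejectsAt_final (t : S) (i : I) :
    ¬ P.rejectsAt (P.daR (Fintype.card I * Fintype.card S + 1)) t i := by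
  intro hr
  have hmem : t ∈ P.stepR (P.daR (Fintype.card I * Fintype.card S + 1)) i := by
    simp only [stepR, mem_union, mem_filter]
    exact Or.inr ⟨mem_univ t, hr⟩
  rw [P.stepR_final_fix] at hmem
  have hnot := P.propose_daR_not_mem (Fintype.card I * Fintype.card S + 1) i
  rw [hr.1] at hnot
  exact hnot hmem

lemma DA_card_le (t : S) :
    (Finset.univ.filter fun j => P.DA j = t).card ≤ P.quota t := by
  by_contra hc
  push_neg at hc
  have hne : (Finset.univ.filter fun j => P.DA j = t).Nonempty :=
    card_pos.mp (lt_of_le_of_lt (Nat.zero_le _) hc)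
  obtain ⟨i, hi, hmax⟩ :=
    Finset.exists_max_image (Finset.univ.filter fun j => P.DA j = t) (P.prio t) hne
  have hsub : (Finset.univ.filter fun j => P.DA j = t).erase i ⊆
      Finset.univ.filter fun j =>
        P.propose (P.daR (Fintype.card I * Fintype.card S + 1)) j = t ∧
          P.prio t j < P.prio t i := by
    intro a ha
    rw [mem_erase] at ha
    have haApp := (mem_filter.mp ha.2).2
    refine mem_filter.mpr ⟨mem_univ a, haApp, lt_of_le_of_ne (hmax a ha.2) ?_⟩
    intro he; exact ha.1 (P.prio_inj t he)
  have hcard := card_le_card hsub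
  rw [card_erase_of_mem hi] at hcard
  have hrej : P.rejectsAt (P.daR (Fintype.card I * Fintype.card S + 1)) t i :=
    ⟨(mem_filter.mp hi).2, by omega⟩
  exact P.not_rejectsAt_final t i hrej

lemma invariant_ge (t : S) (i : I) {m k : ℕ} (hmk : m ≤ k)
    (h : P.quota t ≤ (Finset.univ.filter fun j =>
      P.propose (P.daR m) j = t ∧ P.prio t j < P.prio t i).card) :
    P.quota t ≤ (Finset.univ.filter fun j =>
      P.propose (P.daR k) j = t ∧ P.prio t j < P.prio t i).card := by
  induction k, hmk using Nat.le_induction with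
  | base => exact h
  | succ k _ ih => exact P.invariant_step t i k ih

lemma rejected_exists {n : ℕ} {t : S} {i : I} (h : t ∈ P.daR n i) :
    ∃ m < n, P.rejectsAt (P.daR m) t i := by
  induction n with
  | zero => simp [daR] at h
  | succ n ih =>
    simp only [daR, stepR, mem_union, mem_filter] at h
    rcases h with h | ⟨-, h⟩
    · obtain ⟨m, hm, hr⟩ := ih h; exact ⟨m, by omega, hr⟩
    · exact ⟨n, by omega, h⟩

/-- Stability of DA: if `i` strictly prefers `t` to her DA assignment, then
every student assigned to `t` under DA has strictly higher priority at `t`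
than `i`, and `t` is filled exactly to quota under DA. -/
lemma DA_stable {i : I} {t : S} (h : P.rk i t < P.rk i (P.DA i)) :
    (∀ j : I, P.DA j = t → P.prio t j < P.prio t i) ∧
      (Finset.univ.filter fun j => P.DA j = t).card = P.quota t := by
  have hmem : t ∈ P.daR (Fintype.card I * Fintype.card S + 1) i := by
    by_contra hc
    have hmin := (P.propose_spec
      (P.daR_diff_nonempty (Fintype.card I * Fintype.card S + 1) i)).2 t
      (mem_sdiff.mpr ⟨mem_univ t, hc⟩)
    exact absurd h (not_lt.mpr hmin)
  obtain ⟨m, hm, hr⟩ := P.rejected_exists hmem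
  have hinv := P.invariant_ge t i (Nat.le_of_lt hm) hr.2
  have hle := P.DA_card_le t
  have hsubC : (Finset.univ.filter fun j => P.DA j = t ∧ P.prio t j < P.prio t i)
      ⊆ Finset.univ.filter fun j => P.DA j = t := by
    intro a ha
    rw [mem_filter] at ha ⊢
    exact ⟨ha.1, ha.2.1⟩
  have hinv' : P.quota t ≤ (Finset.univ.filter fun j =>
      P.DA j = t ∧ P.prio t j < P.prio t i).card := hinv
  have heq : (Finset.univ.filter fun j => P.DA j = t ∧ P.prio t j < P.prio t i)
      = Finset.univ.filter fun j => P.DA j = t :=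
    Finset.eq_of_subset_of_card_le hsubC (hle.trans hinv')
  constructor
  · intro j hj
    have : j ∈ Finset.univ.filter fun j => P.DA j = t ∧ P.prio t j < P.prio t i := by
      rw [heq]; exact mem_filter.mpr ⟨mem_univ j, hj⟩
    exact (mem_filter.mp this).2.2
  · have h1 := card_le_card hsubC
    omega

end SchoolChoice

/-- Every advantaged student assigned under DA to a school that
is not fully segregated is unimprovable: if `y ∈ Y` is assigned to `s` under
DA and `s` also admits some marginalized student under DA, then every
stable-dominating matching `ν` satisfies `ν y = s`. -/
theorem advantaged_at_mixed_school_unimprovable {I S : Type} [Fintype I]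
    [Fintype S] [DecidableEq I] [DecidableEq S] (P : SchoolChoice I S)
    (Y Z : Finset I) (hY : Y.Nonempty) (hZ : Z.Nonempty)
    (hdisj : Disjoint Y Z) (hcover : Y ∪ Z = Finset.univ)
    (hprio : ∀ s : S, ∀ y ∈ Y, ∀ z ∈ Z, P.prio s y < P.prio s z)
    (y : I) (hy : y ∈ Y) (s : S) (hys : P.DA y = s)
    (z : I) (hz : z ∈ Z) (hzs : P.DA z = s) :
    ∀ ν : I → S, P.StableDominating ν → ν y = s := by
  classical
  open Finset SchoolChoice in
  intro ν hν
  obtain ⟨hmatch, hdom⟩ := hν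
  by_contra hne
  -- the sets of students assigned to each school under DA (A) and under ν (B),
  -- and the set M of students whose assignment changes
  set M : Finset I := Finset.univ.filter (fun i => ν i ≠ P.DA i) with hM
  set A : S → Finset I := fun t => Finset.univ.filter (fun i => P.DA i = t) with hA
  set B : S → Finset I := fun t => Finset.univ.filter (fun i => ν i = t) with hB
  have hmemA : ∀ (i : I) (t : S), i ∈ A t ↔ P.DA i = t := by
    intro i t; rw [hA]; simp
  have hmemB : ∀ (i : I) (t : S), i ∈ B t ↔ ν i = t := by
    intro i t; rw [hB]; simp
  have hmemM : ∀ i : I, i ∈ M ↔ ν i ≠ P.DA i := by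
    intro i; rw [hM]; simp
  -- every entrant strictly prefers her new school to her DA school
  have hdes : ∀ t, ∀ k ∈ B t \ A t, P.rk k t < P.rk k (P.DA k) := by
    intro t k hk
    rw [mem_sdiff, hmemB, hmemA] at hk
    rw [← hk.1]
    exact lt_of_le_of_ne (hdom k) fun he => (hk.1 ▸ hk.2) (P.rk_inj k he).symm
  -- every entrant has lower priority than every DA resident
  have hpr : ∀ t, ∀ k ∈ B t \ A t, ∀ a ∈ A t, P.prio t a < P.prio t k := by
    intro t k hk a ha
    exact (P.DA_stable (hdes t k hk)).1 a ((hmemA a t).mp ha)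
  -- per-school counting: #leavers = #entrants
  have hAfilter : ∀ t : S, (Finset.univ.filter fun j => P.DA j = t) = A t := by
    intro t; rw [hA]
  have hle : ∀ t ∈ (Finset.univ : Finset S),
      (B t \ A t).card ≤ (A t \ B t).card := by
    intro t _
    rcases (B t \ A t).eq_empty_or_nonempty with he | ⟨k, hk⟩
    · simp [he]
    · have hAq : (A t).card = P.quota t := by
        rw [← hAfilter t]
        exact (P.DA_stable (hdes t k hk)).2
      have hBq : (B t).card ≤ P.quota t := by
        rw [hB]; exact hmatch t
      have e1 := Finset.card_sdiff_add_card_inter (A t) (B t)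
      have e2 := Finset.card_sdiff_add_card_inter (B t) (A t)
      rw [Finset.inter_comm] at e2
      omega
  have hfibL : ∀ t : S, M.filter (fun i => P.DA i = t) = A t \ B t := by
    intro t
    ext i
    rw [mem_filter, mem_sdiff, hmemA, hmemB, hmemM]
    constructor
    · rintro ⟨hi, rfl⟩; exact ⟨rfl, fun hc => hi hc⟩
    · rintro ⟨rfl, hi⟩; exact ⟨fun hc => hi hc, rfl⟩
  have hfibE : ∀ t : S, M.filter (fun i => ν i = t) = B t \ A t := by
    intro t
    ext i
    rw [mem_filter, mem_sdiff, hmemA, hmemB, hmemM]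
    constructor
    · rintro ⟨hi, rfl⟩; exact ⟨rfl, fun hc => hi hc.symm⟩
    · rintro ⟨rfl, hi⟩; exact ⟨fun hc => hi hc.symm, rfl⟩
  have hsumL : ∑ t : S, (A t \ B t).card = M.card := by
    rw [Finset.card_eq_sum_card_fiberwise
      (f := P.DA) (t := Finset.univ) (fun i _ => mem_univ (P.DA i))]
    exact Finset.sum_congr rfl fun t _ => by rw [hfibL t]
  have hsumE : ∑ t : S, (B t \ A t).card = M.card := by
    rw [Finset.card_eq_sum_card_fiberwise
      (f := ν) (t := Finset.univ) (fun i _ => mem_univ (ν i))]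
    exact Finset.sum_congr rfl fun t _ => by rw [hfibE t]
  have hcard_eq : ∀ t : S, (A t \ B t).card = (B t \ A t).card := by
    intro t
    by_contra hne'
    have hlt : (B t \ A t).card < (A t \ B t).card :=
      lt_of_le_of_ne (hle t (mem_univ t)) (Ne.symm hne')
    have := Finset.sum_lt_sum hle ⟨t, mem_univ t, hlt⟩
    omega
  -- if a school has a marginalized DA resident, all entrants are marginalized
  have hent_Z : ∀ t, ∀ a ∈ A t, a ∈ Z → ∀ k ∈ B t \ A t, k ∈ Z := by
    intro t a ha haZ k hk
    have hp := hpr t k hk a ha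
    by_contra hkZ
    have hkY : k ∈ Y := by
      have hu := Finset.mem_univ k
      rw [← hcover, Finset.mem_union] at hu
      tauto
    exact absurd (hprio t k hkY a haZ) (not_lt.mpr (le_of_lt hp))
  -- per-school counting of marginalized movers
  have hZle : ∀ t ∈ (Finset.univ : Finset S),
      ((A t \ B t) ∩ Z).card ≤ ((B t \ A t) ∩ Z).card := by
    intro t _
    rcases ((A t \ B t) ∩ Z).eq_empty_or_nonempty with he | ⟨a, ha⟩
    · simp [he]
    · rw [Finset.mem_inter] at ha
      have hsubZ : B t \ A t ⊆ Z :=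
        fun k hk => hent_Z t a (Finset.sdiff_subset ha.1) ha.2 k hk
      rw [Finset.inter_eq_left.mpr hsubZ, ← hcard_eq t]
      exact card_le_card Finset.inter_subset_left
  have hZs : ((A s \ B s) ∩ Z).card < ((B s \ A s) ∩ Z).card := by
    have hzA : z ∈ A s := (hmemA z s).mpr hzs
    have hsubZ : B s \ A s ⊆ Z := fun k hk => hent_Z s z hzA hz k hk
    have hyL : y ∈ A s \ B s :=
      Finset.mem_sdiff.mpr ⟨(hmemA y s).mpr hys, fun hc => hne ((hmemB y s).mp hc)⟩
    have hyNZ : y ∉ Z := fun hc => (Finset.disjoint_left.mp hdisj hy) hc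
    have hsub2 : (A s \ B s) ∩ Z ⊆ (A s \ B s).erase y := by
      intro a ha
      rw [Finset.mem_inter] at ha
      exact Finset.mem_erase.mpr ⟨fun he => hyNZ (he ▸ ha.2), ha.1⟩
    have h1 := card_le_card hsub2
    rw [Finset.card_erase_of_mem hyL] at h1
    have h2 : 0 < (A s \ B s).card := Finset.card_pos.mpr ⟨y, hyL⟩
    rw [Finset.inter_eq_left.mpr hsubZ, ← hcard_eq s]
    omega
  -- global counting of marginalized movers: contradiction
  have hfibZL : ∀ t : S, (M ∩ Z).filter (fun i => P.DA i = t) = (A t \ B t) ∩ Z := by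
    intro t
    rw [← hfibL t]
    ext i
    simp only [Finset.mem_filter, Finset.mem_inter]
    tauto
  have hfibZE : ∀ t : S, (M ∩ Z).filter (fun i => ν i = t) = (B t \ A t) ∩ Z := by
    intro t
    rw [← hfibE t]
    ext i
    simp only [Finset.mem_filter, Finset.mem_inter]
    tauto
  have hsumZL : ∑ t : S, ((A t \ B t) ∩ Z).card = (M ∩ Z).card := by
    rw [Finset.card_eq_sum_card_fiberwise
      (f := P.DA) (t := Finset.univ) (fun i _ => mem_univ (P.DA i))]
    exact Finset.sum_congr rfl fun t _ => by rw [hfibZL t]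
  have hsumZE : ∑ t : S, ((B t \ A t) ∩ Z).card = (M ∩ Z).card := by
    rw [Finset.card_eq_sum_card_fiberwise
      (f := ν) (t := Finset.univ) (fun i _ => mem_univ (ν i))]
    exact Finset.sum_congr rfl fun t _ => by rw [hfibZE t]
  have hstrict := Finset.sum_lt_sum hZle ⟨s, Finset.mem_univ s, hZs⟩
  omega
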